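/- arXiv:2401.04072 — 2 statements merged into one kernel-verified Lean document; each statement's English description precedes it below -/
import Mathlib

section
/- Let E be a number field equipped with a ℚ-linear field involution α ↦ ᾱ (possibly the identity). Let (U,q) be a nondegenerate quadratic form over ℚ, and suppose that U carries a structure of E-vector space compatible with its ℚ-vector space structure. Then the following are equivalent: (1) q(αx, y) = q(x, ᾱy) for all x, y ∈ U and all α ∈ E; (2) there exists a nondegenerate sesquilinear form h : U × U → E satisfying h(y,x) = conjugate of h(x,y) for all x,y (i.e., h is hermitian with respect to the involution) such that q(x,y) = Tr_{E/ℚ}(h(x,y)) for all x, y ∈ U. -/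
noncomputable section

open scoped Classical TensorProduct

/-- A nondegenerate symmetric bilinear form (a "quadratic form"), given as a bare
function `B : V → V → k`. -/
def IsSymmQF (k : Type*) [Field k] {V : Type*} [AddCommGroup V] [Module k V]
    (B : V → V → k) : Prop :=
  (∀ x y z : V, B (x + y) z = B x z + B y z) ∧
  (∀ (a : k) (x y : V), B (a • x) y = a * B x y) ∧
  (∀ x y : V, B x y = B y x) ∧
  (∀ x : V, (∀ y : V, B x y = 0) → x = 0)

/-- A nondegenerate hermitian (sesquilinear) form over `E` with respect to the
involution `c` (linear in the first variable). -/
def IsHermitianForm {E : Type*} [Field E] (c : E ≃+* E) {W : Type*} [AddCommGroup W]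
    [Module E W] (Q : W → W → E) : Prop :=
  (∀ x y z : W, Q (x + y) z = Q x z + Q y z) ∧
  (∀ (a : E) (x y : W), Q (a • x) y = a * Q x y) ∧
  (∀ x y : W, Q y x = c (Q x y)) ∧
  (∀ x : W, (∀ y : W, Q x y = 0) → x = 0)

/-- The transfer to `ℚ` of an `E`-valued form: `(x, y) ↦ Tr_{E/ℚ} (Q x y)`. -/
def transfer (E : Type*) [Field E] [Algebra ℚ E] {W : Type*} (Q : W → W → E) :
    W → W → ℚ :=
  fun x y => Algebra.trace ℚ E (Q x y)

/-- Isometry of two forms over `k`. -/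
def IsometricForms (k : Type*) [Field k] {V₁ V₂ : Type*} [AddCommGroup V₁] [Module k V₁]
    [AddCommGroup V₂] [Module k V₂] (B₁ : V₁ → V₁ → k) (B₂ : V₂ → V₂ → k) : Prop :=
  ∃ f : V₁ ≃ₗ[k] V₂, ∀ x y : V₁, B₂ (f x) (f y) = B₁ x y

/-- Orthogonal direct sum of two forms. -/
def orthSum {k V₁ V₂ : Type*} [Add k] (B₁ : V₁ → V₁ → k) (B₂ : V₂ → V₂ → k) :
    V₁ × V₂ → V₁ × V₂ → k :=
  fun x y => B₁ x.1 y.1 + B₂ x.2 y.2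

/-- The form `B` over `ℚ` has signature `(p, q)`, witnessed by an orthogonal basis with
`p` positive and `q` negative diagonal entries.  (For a nondegenerate symmetric bilinear
form over `ℚ` this is exactly the signature of `B ⊗ ℝ`.) -/
def HasSignature {V : Type*} [AddCommGroup V] [Module ℚ V] (B : V → V → ℚ)
    (p q : ℕ) : Prop :=
  ∃ b : Module.Basis (Fin (p + q)) ℚ V,
    (∀ i j, i ≠ j → B (b i) (b j) = 0) ∧
    (Finset.univ.filter fun i => 0 < B (b i) (b i)).card = p ∧
    (Finset.univ.filter fun i => B (b i) (b i) < 0).card = q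

/-- The real form `W_σ`, obtained from the `E`-valued form `Q` by extension of scalars
along the real embedding `σ : E →+* ℝ`, has signature `(p, q)`. -/
def HasSignatureAt {E : Type*} [Field E] {W : Type*} [AddCommGroup W] [Module E W]
    (σ : E →+* ℝ) (Q : W → W → E) (p q : ℕ) : Prop :=
  ∃ b : Module.Basis (Fin (p + q)) E W,
    (∀ i j, i ≠ j → Q (b i) (b j) = 0) ∧
    (Finset.univ.filter fun i => 0 < σ (Q (b i) (b i))).card = p ∧
    (Finset.univ.filter fun i => σ (Q (b i) (b i)) < 0).card = q

/-- `a` is a representative of the determinant of `B` in `k^×/k^{×2}`. -/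
def DetRep (k : Type*) [Field k] {V : Type*} [AddCommGroup V] [Module k V]
    (B : V → V → k) (a : k) : Prop :=
  ∃ (n : ℕ) (b : Module.Basis (Fin n) k V) (c : k),
    (∀ i j, i ≠ j → B (b i) (b j) = 0) ∧ c ≠ 0 ∧ (∏ i, B (b i) (b i)) = a * c ^ 2

/-- The hyperbolic plane over `k`. -/
def hypForm (k : Type*) [Field k] : k × k → k × k → k :=
  fun x y => x.1 * y.2 + x.2 * y.1

/-- Orthogonal sum of `a` copies of the hyperbolic plane over `k`. -/
def hypSum (k : Type*) [Field k] (a : ℕ) : (Fin a → k × k) → (Fin a → k × k) → k :=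
  fun x y => ∑ i, hypForm k (x i) (y i)

/-- The diagonal form `⟨d 0, …, d (n-1)⟩` over `k`. -/
def diagForm (k : Type*) [Field k] {n : ℕ} (d : Fin n → k) :
    (Fin n → k) → (Fin n → k) → k :=
  fun x y => ∑ i, d i * x i * y i

/-- The one-dimensional form `⟨h⟩` on `k`. -/
def scalForm {k : Type*} [Field k] (h : k) : k → k → k := fun x y => h * x * y

/-- The form `H³` (orthogonal sum of three hyperbolic planes) over `ℚ`. -/
def H3Form : ((ℚ × ℚ) × (ℚ × ℚ) × (ℚ × ℚ)) → ((ℚ × ℚ) × (ℚ × ℚ) × (ℚ × ℚ)) → ℚ :=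
  orthSum (hypForm ℚ) (orthSum (hypForm ℚ) (hypForm ℚ))

/-- The quadratic form `V_K3 = H³ ⊕ I₁₆` over `ℚ`. -/
def VK3Form : (((ℚ × ℚ) × (ℚ × ℚ) × (ℚ × ℚ)) × (Fin 16 → ℚ)) →
    (((ℚ × ℚ) × (ℚ × ℚ) × (ℚ × ℚ)) × (Fin 16 → ℚ)) → ℚ :=
  orthSum H3Form (diagForm ℚ fun _ => (-1 : ℚ))

/-- The field `E` is totally real. -/
def TotallyReal (E : Type*) [Field E] : Prop :=
  ∀ (φ : E →+* ℂ) (x : E), (φ x).im = 0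

/-- A totally positive element of a number field. -/
def TotallyPositive {E : Type*} [Field E] (α : E) : Prop :=
  ∀ σ : E →+* ℝ, 0 < σ α

/-- `E` is a CM field, with complex conjugation `c`: `c` is a nontrivial automorphism
which corresponds to complex conjugation under every complex embedding. -/
def IsCMWithConj (E : Type*) [Field E] [NumberField E] (c : E ≃+* E) : Prop :=
  c ≠ RingEquiv.refl E ∧ ∀ (φ : E →+* ℂ) (x : E), φ (c x) = starRingEnd ℂ (φ x)

/-- `p ∈ S_E`: the prime `p` is such that `E ⊗_ℚ ℚ_p ≅ (E₀ ⊗_ℚ ℚ_p) × (E₀ ⊗_ℚ ℚ_p)`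
as `ℚ_p`-algebras. -/
def MemSE (E : Type*) [Field E] [NumberField E] (E₀ : Type*) [Field E₀] [NumberField E₀]
    (p : ℕ) [Fact p.Prime] : Prop :=
  Nonempty ((ℚ_[p] ⊗[ℚ] E) ≃ₐ[ℚ_[p]] ((ℚ_[p] ⊗[ℚ] E₀) × (ℚ_[p] ⊗[ℚ] E₀)))

/-- Orthogonal sum of `n` copies of a form. -/
def nCopies {k V : Type*} [Field k] (n : ℕ) (B : V → V → k) :
    (Fin n → V) → (Fin n → V) → k :=
  fun x y => ∑ i, B (x i) (y i)

/-- Witt equivalence of two forms over `k`. -/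
def WittEquiv (k : Type*) [Field k] {V₁ V₂ : Type*} [AddCommGroup V₁] [Module k V₁]
    [AddCommGroup V₂] [Module k V₂] (B₁ : V₁ → V₁ → k) (B₂ : V₂ → V₂ → k) : Prop :=
  ∃ a b : ℕ, IsometricForms k (orthSum B₁ (hypSum k a)) (orthSum B₂ (hypSum k b))

/-- The Witt class of `B` is torsion: some number `n ≥ 1` of orthogonal copies of `B`
is isometric to a sum of hyperbolic planes. -/
def WittTorsion (k : Type*) [Field k] {V : Type*} [AddCommGroup V] [Module k V]
    (B : V → V → k) : Prop :=
  ∃ n : ℕ, 1 ≤ n ∧ ∃ a : ℕ, IsometricForms k (nCopies n B) (hypSum k a)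

/-- `B ⊗_ℚ ℚ_p` is isometric to the orthogonal sum of `N` hyperbolic planes: the Gram
matrix of `B` in some (any) basis, viewed over `ℚ_p`, gives a form isometric to `H^N`. -/
def PadicHyperbolic (p : ℕ) [Fact p.Prime] {V : Type*} [AddCommGroup V] [Module ℚ V]
    (B : V → V → ℚ) (N : ℕ) : Prop :=
  ∃ b : Module.Basis (Fin (2 * N)) ℚ V,
    IsometricForms ℚ_[p]
      (fun x y : Fin (2 * N) → ℚ_[p] => ∑ i, ∑ j, ((B (b i) (b j) : ℚ) : ℚ_[p]) * x i * y j)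
      (hypSum ℚ_[p] N)

/-- The Hilbert symbol `(a, b)_p` vanishes: `z² = a x² + b y²` has a nonzero solution
over `ℚ_p`. -/
def HilbertVanishes (p : ℕ) [Fact p.Prime] (a b : ℚ) : Prop :=
  ∃ x y z : ℚ_[p], ¬(x = 0 ∧ y = 0 ∧ z = 0) ∧
    z ^ 2 = (a : ℚ_[p]) * x ^ 2 + (b : ℚ_[p]) * y ^ 2

/-!
Since the trace form of `E/ℚ` is nondegenerate, each `ℚ`-linear functional `α ↦ q (α • x) y`
on `E` is `α ↦ Tr (h x y * α)` for a unique `h x y ∈ E`. Uniqueness transports the properties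
of `q` to `h`: `E`-linearity in `x` comes from `(α * a) • x = α • a • x`, and hermitian symmetry
from the adjointness of `α` and `ᾱ` together with the invariance of the trace under the
involution. Conversely, a hermitian form is conjugate-linear in its second variable, which makes
multiplication by `α` and by `ᾱ` adjoint for its trace.
-/

open Module

section TraceLift

variable (k K : Type*) {V : Type*} [Field k] [Field K] [Algebra k K] [FiniteDimensional k K]
  [Algebra.IsSeparable k K] [AddCommGroup V] [Module k V] [Module K V] [IsScalarTower k K V]

abbrev traceDualEquiv : K ≃ₗ[k] Dual k K :=
  (Algebra.traceForm k K).toDual (traceForm_nondegenerate k K)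

variable {k K}

theorem eq_of_forall_trace_mul_eq {z z' : K}
    (h : ∀ α, Algebra.trace k K (z * α) = Algebra.trace k K (z' * α)) : z = z' :=
  (traceDualEquiv k K).injective (LinearMap.ext h)

variable {B : V → V → k}

def IsSymmQF.smulFunctional (hq : IsSymmQF k B) (x y : V) : Dual k K where
  toFun α := B (α • x) y
  map_add' a b := by rw [add_smul]; exact hq.1 _ _ _
  map_smul' r a := by rw [smul_assoc]; exact hq.2.1 r _ _

variable (K) in
def IsSymmQF.traceLift (hq : IsSymmQF k B) (x y : V) : K :=
  (traceDualEquiv k K).symm (hq.smulFunctional x y)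

theorem IsSymmQF.trace_traceLift_mul (hq : IsSymmQF k B) (x y : V) (α : K) :
    Algebra.trace k K (hq.traceLift K x y * α) = B (α • x) y := by
  rw [← Algebra.traceForm_apply]
  exact LinearMap.BilinForm.apply_toDual_symm_apply ..

theorem IsSymmQF.trace_traceLift (hq : IsSymmQF k B) (x y : V) :
    Algebra.trace k K (hq.traceLift K x y) = B x y := by
  simpa using hq.trace_traceLift_mul x y (1 : K)

end TraceLift

theorem Algebra.trace_ringEquiv_rat {A : Type*} [CommRing A] [Algebra ℚ A] (e : A ≃+* A)
    (x : A) : Algebra.trace ℚ A (e x) = Algebra.trace ℚ A x :=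
  Algebra.trace_eq_of_algEquiv e.toRatAlgEquiv x

theorem IsHermitianForm.apply_smul_right {E W : Type*} [Field E] [AddCommGroup W] [Module E W]
    {c : E ≃+* E} {h : W → W → E} (hh : IsHermitianForm c h) (β : E) (x y : W) :
    h x (β • y) = c β * h x y := by
  rw [hh.2.2.1 (β • y) x, hh.2.1, map_mul, ← hh.2.2.1 y x]

theorem IsSymmQF.isHermitianForm_traceLift {E U : Type*} [Field E] [NumberField E]
    [AddCommGroup U] [Module ℚ U] [Module E U] [IsScalarTower ℚ E U] {q : U → U → ℚ}
    (hq : IsSymmQF ℚ q) {c : E ≃+* E} (hadj : ∀ (α : E) (x y : U), q (α • x) y = q x (c α • y)) :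
    IsHermitianForm c (hq.traceLift E) := by
  obtain ⟨hadd, -, hsymm, hnondeg⟩ := id hq
  refine ⟨fun x y z => ?_, fun a x y => ?_, fun x y => ?_, fun x hx => ?_⟩
  · refine eq_of_forall_trace_mul_eq (k := ℚ) fun α => ?_
    rw [add_mul, map_add, hq.trace_traceLift_mul, hq.trace_traceLift_mul, hq.trace_traceLift_mul,
      smul_add, hadd]
  · refine eq_of_forall_trace_mul_eq (k := ℚ) fun α => ?_
    rw [hq.trace_traceLift_mul, smul_smul, ← hq.trace_traceLift_mul]
    ring_nf
  · refine eq_of_forall_trace_mul_eq (k := ℚ) fun α => ?_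
    calc Algebra.trace ℚ E (hq.traceLift E y x * α) = q (α • y) x := hq.trace_traceLift_mul ..
      _ = q (c.symm α • x) y := by rw [hsymm, hadj, c.apply_symm_apply]
      _ = Algebra.trace ℚ E (c (hq.traceLift E x y * c.symm α)) := by
        rw [Algebra.trace_ringEquiv_rat, hq.trace_traceLift_mul]
      _ = Algebra.trace ℚ E (c (hq.traceLift E x y) * α) := by
        rw [map_mul, c.apply_symm_apply]
  · refine hnondeg x fun y => ?_
    rw [← hq.trace_traceLift (K := E), hx, map_zero]

theorem statement_1_general
    {E : Type*} [Field E] [NumberField E]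
    (c : E ≃+* E) (hc : ∀ x : E, c (c x) = x)
    {U : Type*} [AddCommGroup U] [Module ℚ U] [Module E U] [IsScalarTower ℚ E U]
    (q : U → U → ℚ) (hq : IsSymmQF ℚ q) :
    (∀ (α : E) (x y : U), q (α • x) y = q x (c α • y)) ↔
      ∃ h : U → U → E, IsHermitianForm c h ∧
        ∀ x y : U, q x y = Algebra.trace ℚ E (h x y) := by
  constructor
  · intro hadj
    exact ⟨hq.traceLift E, hq.isHermitianForm_traceLift hadj,
      fun x y => (hq.trace_traceLift x y).symm⟩
  · rintro ⟨h, hh, htr⟩ α x y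
    rw [htr, htr, hh.2.1, hh.apply_smul_right, hc]

/-- the transfer lemma. -/
theorem statement_1
    {E : Type*} [Field E] [NumberField E]
    (c : E ≃+* E) (hc : ∀ x : E, c (c x) = x)
    {U : Type*} [AddCommGroup U] [Module ℚ U] [Module E U] [IsScalarTower ℚ E U]
    [FiniteDimensional ℚ U]
    (q : U → U → ℚ) (hq : IsSymmQF ℚ q) :
    (∀ (α : E) (x y : U), q (α • x) y = q x (c α • y)) ↔
      ∃ h : U → U → E, IsHermitianForm c h ∧
        ∀ x y : U, q x y = Algebra.trace ℚ E (h x y) :=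
  statement_1_general c hc q hq
end
end

section
/- Let E be a CM field of degree 20 whose discriminant Δ_E is a square in ℚ^×. Suppose that W is a one-dimensional nondegenerate hermitian form over E and V' is a nondegenerate quadratic form over ℚ such that T(W) ⊕ V' is isometric to V_K3. Then V' is isometric to the hyperbolic plane H. -/
/-!
Only the dimension and the determinant class in `ℚ^×/ℚ^×²` of the forms matter.
A one-dimensional hermitian form is `⟨α⟩` with `ᾱ = α`, and in an integral basis the Gram
matrix of its transfer is the trace matrix times the matrix of `x ↦ α x̄`, so
`det T(W) = Δ_E · det(x ↦ α x̄)`. Conjugation splits `E = E₀ ⊕ δE₀` into its `±1`-eigenspaces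
(with `δ̄ = -δ`), and multiplication by `δ` intertwines the action of `α` on both, so
`det(x ↦ α x̄) = (-1)^[E₀:ℚ] · N_{E₀/ℚ}(α)²`, a square since `[E₀:ℚ] = 10`. Hence `det T(W)`
is a square and `V'` is a plane of determinant `det V_K3 = -1`: such a plane is isotropic,
hence hyperbolic.
-/

noncomputable section

open scoped Classical TensorProduct

open Module

section Forms

variable {k : Type*} [Field k] {V V₁ V₂ : Type*} [AddCommGroup V] [Module k V]
  [AddCommGroup V₁] [Module k V₁] [AddCommGroup V₂] [Module k V₂]

namespace IsSymmQF

variable {B : V → V → k}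

def toBilin (hB : IsSymmQF k B) : LinearMap.BilinForm k V :=
  LinearMap.mk₂ k B hB.1 hB.2.1
    (fun x y z => by rw [hB.2.2.1, hB.1, hB.2.2.1 y, hB.2.2.1 z])
    (fun a x y => by rw [hB.2.2.1, hB.2.1, hB.2.2.1, smul_eq_mul])

@[simp]
lemma toBilin_apply (hB : IsSymmQF k B) (x y : V) : hB.toBilin x y = B x y := rfl

lemma toBilin_isSymm (hB : IsSymmQF k B) : LinearMap.IsSymm hB.toBilin :=
  ⟨fun x y => hB.2.2.1 x y⟩

lemma orthSum {B₁ : V₁ → V₁ → k} {B₂ : V₂ → V₂ → k} (h₁ : IsSymmQF k B₁)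
    (h₂ : IsSymmQF k B₂) : IsSymmQF k (_root_.orthSum B₁ B₂) := by
  refine ⟨fun x y z => ?_, fun a x y => ?_, fun x y => ?_, fun x hx => ?_⟩
  · simp only [_root_.orthSum, Prod.fst_add, Prod.snd_add, h₁.1, h₂.1]
    ring
  · simp only [_root_.orthSum, Prod.smul_fst, Prod.smul_snd, h₁.2.1, h₂.2.1]
    ring
  · simp only [_root_.orthSum, h₁.2.2.1 x.1, h₂.2.2.1 x.2]
  · have h0₁ : ∀ y, B₁ y 0 = 0 := fun y => map_zero (h₁.toBilin y)
    have h0₂ : ∀ y, B₂ y 0 = 0 := fun y => map_zero (h₂.toBilin y)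
    refine Prod.ext (h₁.2.2.2 _ fun y => ?_) (h₂.2.2.2 _ fun y => ?_)
    · simpa [_root_.orthSum, h0₂] using hx (y, 0)
    · simpa [_root_.orthSum, h0₁] using hx (0, y)

end IsSymmQF

lemma isSymmQF_hypForm : IsSymmQF k (hypForm k) := by
  refine ⟨fun x y z => ?_, fun a x y => ?_, fun x y => ?_, fun x hx => ?_⟩
  · simp only [hypForm, Prod.fst_add, Prod.snd_add]
    ring
  · simp only [hypForm, Prod.smul_fst, Prod.smul_snd, smul_eq_mul]
    ring
  · simp only [hypForm]
    ring
  · simpa [hypForm, Prod.ext_iff] using And.intro (hx (0, 1)) (hx (1, 0))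

lemma isSymmQF_diagForm {n : ℕ} {d : Fin n → k} (hd : ∀ i, d i ≠ 0) :
    IsSymmQF k (diagForm k d) := by
  refine ⟨fun x y z => ?_, fun a x y => ?_, fun x y => ?_, fun x hx => ?_⟩
  · simp only [diagForm, Pi.add_apply, ← Finset.sum_add_distrib]
    exact Finset.sum_congr rfl fun i _ => by ring
  · simp only [diagForm, Pi.smul_apply, smul_eq_mul, Finset.mul_sum]
    exact Finset.sum_congr rfl fun i _ => by ring
  · exact Finset.sum_congr rfl fun i _ => by ring
  · funext i
    simpa [diagForm, Pi.single_apply, hd i] using hx (Pi.single i 1)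

lemma isSymmQF_VK3Form : IsSymmQF ℚ VK3Form :=
  (isSymmQF_hypForm.orthSum (isSymmQF_hypForm.orthSum isSymmQF_hypForm)).orthSum
    (isSymmQF_diagForm fun _ => by norm_num)

end Forms

section DetRep

variable {k : Type*} [Field k] {V V₁ V₂ : Type*} [AddCommGroup V] [Module k V]
  [AddCommGroup V₁] [Module k V₁] [AddCommGroup V₂] [Module k V₂]

lemma IsometricForms.symm {B₁ : V₁ → V₁ → k} {B₂ : V₂ → V₂ → k}
    (h : IsometricForms k B₁ B₂) : IsometricForms k B₂ B₁ := by
  obtain ⟨f, hf⟩ := h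
  exact ⟨f.symm, fun x y => by rw [← hf, f.apply_symm_apply, f.apply_symm_apply]⟩

namespace DetRep

lemma of_isometric {B₁ : V₁ → V₁ → k} {B₂ : V₂ → V₂ → k} {a : k}
    (hd : DetRep k B₁ a) (h : IsometricForms k B₁ B₂) : DetRep k B₂ a := by
  obtain ⟨f, hf⟩ := h
  obtain ⟨n, b, c, horth, hc, hprod⟩ := hd
  exact ⟨n, b.map f, c, fun i j hij => by simpa [hf] using horth i j hij, hc,
    by simpa [hf] using hprod⟩

lemma mul_sq {B : V → V → k} {a u : k} (hd : DetRep k B a) (hu : u ≠ 0) :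
    DetRep k B (a * u ^ 2) := by
  obtain ⟨n, b, c, horth, hc, hprod⟩ := hd
  refine ⟨n, b, c / u, horth, div_ne_zero hc hu, ?_⟩
  rw [hprod]
  field_simp

lemma orthSum {B₁ : V₁ → V₁ → k} {B₂ : V₂ → V₂ → k} (h₁ : IsSymmQF k B₁)
    (h₂ : IsSymmQF k B₂) {a₁ a₂ : k} (hd₁ : DetRep k B₁ a₁) (hd₂ : DetRep k B₂ a₂) :
    DetRep k (_root_.orthSum B₁ B₂) (a₁ * a₂) := by
  obtain ⟨n, b, c, hb, hc, hp⟩ := hd₁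
  obtain ⟨m, b', c', hb', hc', hp'⟩ := hd₂
  have z₁ : ∀ x, B₁ x 0 = 0 ∧ B₁ 0 x = 0 := fun x =>
    ⟨map_zero (h₁.toBilin x), LinearMap.map_zero₂ h₁.toBilin x⟩
  have z₂ : ∀ x, B₂ x 0 = 0 ∧ B₂ 0 x = 0 := fun x =>
    ⟨map_zero (h₂.toBilin x), LinearMap.map_zero₂ h₂.toBilin x⟩
  let e := (b.prod b').reindex finSumFinEquiv
  have he : ∀ s, e (finSumFinEquiv s) = b.prod b' s := fun s => by simp [e]
  have horth : ∀ s t, s ≠ t →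
      _root_.orthSum B₁ B₂ (b.prod b' s) (b.prod b' t) = 0 := by
    rintro (s | s) (t | t) hst
    · simpa [_root_.orthSum, z₂] using hb s t (by simpa using hst)
    · simp [_root_.orthSum, z₁, z₂]
    · simp [_root_.orthSum, z₁, z₂]
    · simpa [_root_.orthSum, z₁] using hb' s t (by simpa using hst)
  refine ⟨n + m, e, c * c', fun i j hij => ?_, mul_ne_zero hc hc', ?_⟩
  · obtain ⟨s, rfl⟩ := finSumFinEquiv.surjective i
    obtain ⟨t, rfl⟩ := finSumFinEquiv.surjective j
    rw [he, he]
    exact horth s t (fun h => hij (by rw [h]))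
  · rw [← finSumFinEquiv.prod_comp]
    simp only [he, Fintype.prod_sum_type]
    simp [_root_.orthSum, Module.Basis.prod_apply, z₁, z₂, hp, hp']
    ring

end DetRep

lemma detRep_hypForm [NeZero (2 : k)] : DetRep k (hypForm k) (-1) := by
  have hli : LinearIndependent k ![((1 : k), (1 : k)), (1, -1)] := by
    rw [LinearIndependent.pair_iff]
    intro s t h
    simp only [Prod.smul_mk, smul_eq_mul, mul_one, mul_neg, Prod.mk_add_mk, Prod.mk_eq_zero] at h
    have h2 : (2 : k) * s = 0 := by linear_combination h.1 + h.2
    have hs : s = 0 := (mul_eq_zero.mp h2).resolve_left two_ne_zero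
    exact ⟨hs, by simpa [hs] using h.1⟩
  let b := basisOfLinearIndependentOfCardEqFinrank hli (by simp)
  refine ⟨2, b, 2, fun i j hij => ?_, two_ne_zero, ?_⟩
  · fin_cases i <;> fin_cases j <;> simp_all [b, hypForm]
  · simp [b, hypForm, Fin.prod_univ_two]
    ring

lemma detRep_diagForm {n : ℕ} (d : Fin n → k) : DetRep k (diagForm k d) (∏ i, d i) :=
  ⟨n, Pi.basisFun k (Fin n), 1,
    fun i j hij => by simp [diagForm, Pi.single_apply, hij.symm],
    one_ne_zero, by simp [diagForm, Pi.single_apply]⟩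

lemma detRep_VK3Form : DetRep ℚ VK3Form (-1) := by
  have hH : IsSymmQF ℚ (hypForm ℚ) := isSymmQF_hypForm
  have hH3 : DetRep ℚ H3Form (-1 * (-1 * -1)) :=
    DetRep.orthSum hH (hH.orthSum hH) detRep_hypForm
      (DetRep.orthSum hH hH detRep_hypForm detRep_hypForm)
  have h : DetRep ℚ VK3Form (-1 * (-1 * -1) * ∏ _i : Fin 16, (-1 : ℚ)) :=
    DetRep.orthSum (hH.orthSum (hH.orthSum hH)) (isSymmQF_diagForm fun _ => by norm_num) hH3
      (detRep_diagForm _)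
  norm_num at h
  exact h

end DetRep

section Gram

variable {k : Type*} [Field k] {V : Type*} [AddCommGroup V] [Module k V]
  {ι : Type*} [Fintype ι] [DecidableEq ι]

lemma LinearMap.BilinForm.det_toMatrix₂_eq_mul_sq (B : LinearMap.BilinForm k V)
    (b b' : Basis ι k V) :
    ∃ u : k, u ≠ 0 ∧
      (LinearMap.toMatrix₂ b b B).det = (LinearMap.toMatrix₂ b' b' B).det * u ^ 2 := by
  have := b'.invertibleToMatrix b
  refine ⟨(b'.toMatrix b).det, (Matrix.isUnit_det_of_invertible _).ne_zero, ?_⟩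
  rw [← LinearMap.toMatrix₂_mul_basis_toMatrix b' b' b b, Matrix.det_mul, Matrix.det_mul,
    Matrix.det_transpose]
  ring

lemma DetRep.exists_det_toMatrix₂_eq (B : LinearMap.BilinForm k V) (b : Basis ι k V) {a : k}
    (h : DetRep k (fun x y => B x y) a) :
    ∃ u : k, u ≠ 0 ∧ (LinearMap.toMatrix₂ b b B).det = a * u ^ 2 := by
  obtain ⟨n, b', c, hb', hc, hp⟩ := h
  let b'' := b'.reindex (b'.indexEquiv b)
  have hdiag : LinearMap.toMatrix₂ b'' b'' B = Matrix.diagonal fun i => B (b'' i) (b'' i) := by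
    ext i j
    rcases eq_or_ne i j with rfl | hij
    · simp [LinearMap.toMatrix₂_apply]
    · have := hb' _ _ ((b'.indexEquiv b).symm.injective.ne hij)
      simp [LinearMap.toMatrix₂_apply, b'', hij, this]
  have hprod : ∏ i, B (b'' i) (b'' i) = a * c ^ 2 := by
    rw [← hp, ← (b'.indexEquiv b).prod_comp]
    simp [b'']
  obtain ⟨u, hu, hdet⟩ := B.det_toMatrix₂_eq_mul_sq b b''
  exact ⟨c * u, mul_ne_zero hc hu, by rw [hdet, hdiag, Matrix.det_diagonal, hprod]; ring⟩

lemma LinearMap.IsSymm.detRep_det_toMatrix₂ [NeZero (2 : k)] [FiniteDimensional k V]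
    {B : LinearMap.BilinForm k V} (hB : LinearMap.IsSymm B) (b : Basis ι k V) :
    DetRep k (fun x y => B x y) (LinearMap.toMatrix₂ b b B).det := by
  have := invertibleOfNonzero (two_ne_zero : (2 : k) ≠ 0)
  obtain ⟨v, hv⟩ := LinearMap.BilinForm.exists_orthogonal_basis hB
  have hv' : DetRep k (fun x y => B x y) (∏ i, B (v i) (v i)) :=
    ⟨_, v, 1, fun i j hij => hv hij, one_ne_zero, by simp⟩
  obtain ⟨u, hu, hdet⟩ := hv'.exists_det_toMatrix₂_eq B b
  simpa [hdet] using hv'.mul_sq hu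

namespace IsSymmQF

variable {B : V → V → k}

lemma exists_detRep [NeZero (2 : k)] [FiniteDimensional k V] (hB : IsSymmQF k B) :
    ∃ a, DetRep k B a :=
  ⟨_, hB.toBilin_isSymm.detRep_det_toMatrix₂ (Module.finBasis k V)⟩

lemma detRep_unique (hB : IsSymmQF k B) {a a' : k} (h : DetRep k B a) (h' : DetRep k B a') :
    ∃ u : k, u ≠ 0 ∧ a' = a * u ^ 2 := by
  obtain ⟨n, b, -⟩ := id h
  obtain ⟨u, hu, hdet⟩ := h.exists_det_toMatrix₂_eq hB.toBilin b
  obtain ⟨u', hu', hdet'⟩ := h'.exists_det_toMatrix₂_eq hB.toBilin b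
  refine ⟨u / u', div_ne_zero hu hu', ?_⟩
  field_simp
  rw [← hdet, ← hdet']

end IsSymmQF

end Gram

section Binary

variable {k : Type*} [Field k] {V : Type*} [AddCommGroup V] [Module k V] {B : V → V → k}

namespace IsSymmQF

lemma apply_add_smul (hB : IsSymmQF k B) (a b a' b' : k) (x y : V) :
    B (a • x + b • y) (a' • x + b' • y) =
      a * a' * B x x + (a * b' + a' * b) * B x y + b * b' * B y y := by
  simp only [← toBilin_apply hB, map_add, map_smul, LinearMap.add_apply, LinearMap.smul_apply,
    smul_eq_mul]
  simp only [toBilin_apply, hB.2.2.1 y x]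
  ring

lemma exists_isotropic_of_detRep_neg_one (hB : IsSymmQF k B) (h2 : finrank k V = 2)
    (h : DetRep k B (-1)) : ∃ e : V, e ≠ 0 ∧ B e e = 0 := by
  obtain ⟨n, b, c, hb, hc, hp⟩ := h
  obtain rfl : n = 2 := by simpa [h2] using (finrank_eq_card_basis b).symm
  rw [Fin.prod_univ_two] at hp
  -- with `dᵢ = B (b i) (b i)`: `B e e = d₀ (c² + d₀ d₁) = 0` because `d₀ d₁ = -c²`
  refine ⟨c • b 0 + B (b 0) (b 0) • b 1, fun h0 => hc ?_, ?_⟩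
  · simpa using congr_arg (fun v => b.repr v 0) h0
  · rw [hB.apply_add_smul, hb 0 1 (by decide)]
    linear_combination B (b 0) (b 0) * hp

lemma exists_hyperbolic_partner [NeZero (2 : k)] (hB : IsSymmQF k B) {e : V} (he : e ≠ 0)
    (hee : B e e = 0) : ∃ f : V, B f f = 0 ∧ B e f = 1 := by
  obtain ⟨g, hg⟩ : ∃ g, B e g ≠ 0 := by
    by_contra! h
    exact he (hB.2.2.2 e h)
  set g' := (B e g)⁻¹ • g
  have hg' : B g' e = 1 := by
    rw [hB.2.1, hB.2.2.1 g, inv_mul_cancel₀ hg]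
  refine ⟨g' + (-(B g' g' / 2)) • e, ?_, ?_⟩
  · have := hB.apply_add_smul 1 (-(B g' g' / 2)) 1 (-(B g' g' / 2)) g' e
    rw [one_smul] at this
    rw [this, hee, hg']
    field_simp
    ring
  · have := hB.apply_add_smul 0 1 1 (-(B g' g' / 2)) g' e
    simp only [zero_smul, zero_add, one_smul] at this
    rw [this, hee, hg']
    ring

lemma isometricForms_hypForm_of_hyperbolic_pair (hB : IsSymmQF k B) (h2 : finrank k V = 2)
    {e f : V} (hee : B e e = 0) (hff : B f f = 0) (hef : B e f = 1) :
    IsometricForms k B (hypForm k) := by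
  let G : k × k →ₗ[k] V :=
    (LinearMap.fst k k k).smulRight e + (LinearMap.snd k k k).smulRight f
  have hG : ∀ p q, B (G p) (G q) = hypForm k p q := fun p q => by
    simp only [G, LinearMap.add_apply, LinearMap.smulRight_apply, LinearMap.fst_apply,
      LinearMap.snd_apply, hB.apply_add_smul, hee, hff, hef, hypForm]
    ring
  have hinj : Function.Injective G := by
    rw [← LinearMap.ker_eq_bot, LinearMap.ker_eq_bot']
    intro p hp
    have h0 : ∀ q, hypForm k p q = 0 := fun q => by
      rw [← hG, hp]
      exact LinearMap.map_zero₂ hB.toBilin _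
    simpa [hypForm, Prod.ext_iff, and_comm] using And.intro (h0 (1, 0)) (h0 (0, 1))
  have : FiniteDimensional k V := Module.finite_of_finrank_pos (by omega)
  have hsurj : Function.Surjective G :=
    (LinearMap.injective_iff_surjective_of_finrank_eq_finrank (by simp [h2])).mp hinj
  let F := LinearEquiv.ofBijective G ⟨hinj, hsurj⟩
  refine ⟨F.symm, fun x y => ?_⟩
  rw [← hG]
  congr 1 <;> exact F.apply_symm_apply _

lemma isometricForms_hypForm_of_detRep_neg_one [NeZero (2 : k)] (hB : IsSymmQF k B)
    (h2 : finrank k V = 2) (h : DetRep k B (-1)) : IsometricForms k B (hypForm k) := by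
  obtain ⟨e, he, hee⟩ := hB.exists_isotropic_of_detRep_neg_one h2 h
  obtain ⟨f, hff, hef⟩ := hB.exists_hyperbolic_partner he hee
  exact hB.isometricForms_hypForm_of_hyperbolic_pair h2 hee hff hef

end IsSymmQF

end Binary

section Involution

open Module.End

variable {K : Type*} [Field K]

lemma LinearMap.det_eq_det_restrict_mul_det_restrict {M : Type*} [AddCommGroup M] [Module K M]
    [FiniteDimensional K M] {p q : Submodule K M} (h : IsCompl p q) (f : M →ₗ[K] M)
    (hp : ∀ x ∈ p, f x ∈ p) (hq : ∀ x ∈ q, f x ∈ q) :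
    LinearMap.det f = LinearMap.det (f.restrict hp) * LinearMap.det (f.restrict hq) := by
  let e := Submodule.prodEquivOfIsCompl p q h
  have hf : f = (e : p × q →ₗ[K] M) ∘ₗ (f.restrict hp).prodMap (f.restrict hq) ∘ₗ
      (e.symm : M →ₗ[K] p × q) := by
    ext x
    conv_lhs => rw [← e.apply_symm_apply x]
    simp [e, Submodule.coe_prodEquivOfIsCompl']
  conv_lhs => rw [hf]
  rw [LinearMap.det_conj, LinearMap.det_prodMap]

lemma isCompl_eigenspace_one_neg_one [NeZero (2 : K)] {M : Type*} [AddCommGroup M]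
    [Module K M] {f : M →ₗ[K] M} (hf : ∀ x, f (f x) = x) :
    IsCompl (eigenspace f 1) (eigenspace f (-1)) := by
  refine ⟨Submodule.disjoint_def.mpr fun x h₁ h₂ => ?_, codisjoint_iff.mpr ?_⟩
  · rw [mem_eigenspace_iff, one_smul] at h₁
    rw [mem_eigenspace_iff, h₁, neg_one_smul, eq_neg_iff_add_eq_zero, ← two_smul K] at h₂
    exact (smul_eq_zero.mp h₂).resolve_left two_ne_zero
  · refine eq_top_iff.mpr fun x _ => Submodule.mem_sup.mpr
      ⟨(2 : K)⁻¹ • (x + f x), ?_, (2 : K)⁻¹ • (x - f x), ?_, ?_⟩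
    · rw [mem_eigenspace_iff, map_smul, map_add, hf, add_comm, one_smul]
    · rw [mem_eigenspace_iff, map_smul, map_sub, hf, neg_one_smul, ← smul_neg, neg_sub]
    · rw [← smul_add, add_add_sub_cancel, ← two_smul K, smul_smul,
        inv_mul_cancel₀ two_ne_zero, one_smul]

variable {E : Type*} [Field E] [Algebra K E]

namespace AlgEquiv

variable (σ : E ≃ₐ[K] E)

lemma mul_mem_eigenspace {μ ν : K} {a x : E} (ha : σ a = ν • a)
    (hx : x ∈ eigenspace σ.toLinearMap μ) : a * x ∈ eigenspace σ.toLinearMap (ν * μ) := by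
  rw [mem_eigenspace_iff] at *
  simp only [AlgEquiv.toLinearMap_apply, map_mul] at *
  rw [ha, hx, smul_mul_smul_comm]

lemma mulLeft_mapsTo_eigenspace {α : E} (hα : σ α = α) (μ : K) :
    ∀ x ∈ eigenspace σ.toLinearMap μ, LinearMap.mulLeft K α x ∈ eigenspace σ.toLinearMap μ :=
  fun _ hx => by simpa using σ.mul_mem_eigenspace (ν := 1) (by simpa using hα) hx

def eigenspaceOneEquivNegOne {δ : E} (hδ0 : δ ≠ 0) (hδ : σ δ = -δ) :
    eigenspace σ.toLinearMap 1 ≃ₗ[K] eigenspace σ.toLinearMap (-1) :=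
  LinearEquiv.ofLinearMap
    ((LinearMap.mulLeft K δ).restrict fun _ hx => by
      simpa using σ.mul_mem_eigenspace (a := δ) (ν := -1) (by simpa using hδ) hx)
    ((LinearMap.mulLeft K δ⁻¹).restrict fun _ hx => by
      simpa using σ.mul_mem_eigenspace (a := δ⁻¹) (ν := -1) (by simp [hδ]) hx)
    (by ext; simp [hδ0]) (by ext; simp [hδ0])

lemma mulLeft_comp_mapsTo_eigenspace {α : E} (hα : σ α = α) (μ : K) :
    ∀ x ∈ eigenspace σ.toLinearMap μ,
      (LinearMap.mulLeft K α ∘ₗ σ.toLinearMap) x ∈ eigenspace σ.toLinearMap μ := fun x hx => by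
  have hσx : σ x = μ • x := mem_eigenspace_iff.mp hx
  simpa only [LinearMap.comp_apply, AlgEquiv.toLinearMap_apply, hσx, map_smul] using
    (eigenspace σ.toLinearMap μ).smul_mem μ (σ.mulLeft_mapsTo_eigenspace hα μ x hx)

lemma mulLeft_comp_restrict_eigenspace {α : E} (hα : σ α = α) (μ : K) :
    (LinearMap.mulLeft K α ∘ₗ σ.toLinearMap).restrict (σ.mulLeft_comp_mapsTo_eigenspace hα μ) =
      μ • (LinearMap.mulLeft K α).restrict (σ.mulLeft_mapsTo_eigenspace hα μ) := by
  ext ⟨x, hx⟩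
  have hσx : σ x = μ • x := mem_eigenspace_iff.mp hx
  simp [hσx]

@[simp]
lemma coe_eigenspaceOneEquivNegOne_apply {δ : E} (hδ0 : δ ≠ 0) (hδ : σ δ = -δ)
    (x : eigenspace σ.toLinearMap 1) : (σ.eigenspaceOneEquivNegOne hδ0 hδ x : E) = δ * x := rfl

@[simp]
lemma coe_eigenspaceOneEquivNegOne_symm_apply {δ : E} (hδ0 : δ ≠ 0) (hδ : σ δ = -δ)
    (x : eigenspace σ.toLinearMap (-1)) :
    ((σ.eigenspaceOneEquivNegOne hδ0 hδ).symm x : E) = δ⁻¹ * x := rfl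

lemma det_mulLeft_restrict_eigenspace_neg_one {α δ : E} (hα : σ α = α) (hδ0 : δ ≠ 0)
    (hδ : σ δ = -δ) :
    LinearMap.det ((LinearMap.mulLeft K α).restrict (σ.mulLeft_mapsTo_eigenspace hα (-1))) =
      LinearMap.det ((LinearMap.mulLeft K α).restrict (σ.mulLeft_mapsTo_eigenspace hα 1)) := by
  let D := σ.eigenspaceOneEquivNegOne hδ0 hδ
  have hconj : (LinearMap.mulLeft K α).restrict (σ.mulLeft_mapsTo_eigenspace hα (-1)) =
      (D : _ →ₗ[K] _) ∘ₗ (LinearMap.mulLeft K α).restrict (σ.mulLeft_mapsTo_eigenspace hα 1) ∘ₗ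
        (D.symm : _ →ₗ[K] _) := by
    ext x
    simp [D]
    field_simp
  rw [hconj, LinearMap.det_conj]

lemma isSquare_det_mulLeft_comp [NeZero (2 : K)] [FiniteDimensional K E]
    (hσ : ∀ x, σ (σ x) = x) (hσ1 : σ ≠ 1) {α : E} (hα : σ α = α) (h4 : 4 ∣ finrank K E) :
    IsSquare (LinearMap.det (LinearMap.mulLeft K α ∘ₗ σ.toLinearMap)) := by
  obtain ⟨x, hx⟩ : ∃ x, σ x ≠ x := by
    by_contra! h
    exact hσ1 (AlgEquiv.ext h)
  have hδ : σ (x - σ x) = -(x - σ x) := by rw [map_sub, hσ, neg_sub]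
  have hδ0 : x - σ x ≠ 0 := sub_ne_zero.mpr hx.symm
  have hdim := (σ.eigenspaceOneEquivNegOne hδ0 hδ).finrank_eq
  set P := eigenspace σ.toLinearMap 1
  set N := eigenspace σ.toLinearMap (-1)
  have hPN : IsCompl P N := isCompl_eigenspace_one_neg_one hσ
  have hN : Even (finrank K N) := by
    have := Submodule.finrank_add_eq_of_isCompl hPN
    exact ⟨finrank K E / 4, by omega⟩
  refine ⟨LinearMap.det ((LinearMap.mulLeft K α).restrict (σ.mulLeft_mapsTo_eigenspace hα 1)),
    ?_⟩
  rw [LinearMap.det_eq_det_restrict_mul_det_restrict hPN _ (σ.mulLeft_comp_mapsTo_eigenspace hα 1)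
      (σ.mulLeft_comp_mapsTo_eigenspace hα (-1)),
    σ.mulLeft_comp_restrict_eigenspace hα, σ.mulLeft_comp_restrict_eigenspace hα,
    LinearMap.det_smul, LinearMap.det_smul, σ.det_mulLeft_restrict_eigenspace_neg_one hα hδ0 hδ,
    hN.neg_one_pow, one_pow, one_mul]

end AlgEquiv

end Involution

section Transfer

variable {E : Type*} [Field E] {c : E ≃+* E}

lemma IsCMWithConj.conj_conj [NumberField E] (hCM : IsCMWithConj E c) (x : E) : c (c x) = x := by
  let φ : E →ₐ[ℚ] ℂ := IsAlgClosed.lift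
  apply φ.toRingHom.injective
  rw [hCM.2 _ (c x), hCM.2 _ x, Complex.conj_conj]

lemma isHermitianForm_scalar (hc : ∀ x, c (c x) = x) {α : E} (hα0 : α ≠ 0) (hα : c α = α) :
    IsHermitianForm c fun x y : E => x * (α * c y) := by
  refine ⟨fun x y z => add_mul x y _, fun a x y => mul_assoc a x _, fun x y => ?_,
    fun x hx => ?_⟩
  · rw [map_mul, map_mul, hα, hc]
    ring
  · simpa [hα0] using hx 1

lemma IsHermitianForm.isometricForms_of_finrank_eq_one {W : Type*} [AddCommGroup W] [Module E W]
    {Q : W → W → E} (hQ : IsHermitianForm c Q) (hW : Module.finrank E W = 1) :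
    ∃ α : E, α ≠ 0 ∧ c α = α ∧ IsometricForms E Q fun x y : E => x * (α * c y) := by
  obtain ⟨w, hw0, hspan⟩ := finrank_eq_one_iff'.mp hW
  have hQsmul : ∀ a b : E, Q (a • w) (b • w) = a * (Q w w * c b) := fun a b => by
    rw [hQ.2.1, hQ.2.2.1 (b • w), hQ.2.1, map_mul, ← hQ.2.2.1, mul_comm (c b)]
  refine ⟨Q w w, fun h0 => hw0 (hQ.2.2.2 w fun y => ?_), (hQ.2.2.1 w w).symm, ?_⟩
  · obtain ⟨b, rfl⟩ := hspan y
    simpa [h0] using hQsmul 1 b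
  · let g := LinearEquiv.ofBijective (LinearMap.toSpanSingleton E W w)
      ⟨smul_left_injective E hw0, hspan⟩
    refine ⟨g.symm, fun x y => ?_⟩
    obtain ⟨a, rfl⟩ := g.surjective x
    obtain ⟨b, rfl⟩ := g.surjective y
    rw [g.symm_apply_apply, g.symm_apply_apply]
    exact (hQsmul a b).symm

variable [Algebra ℚ E] {W W₁ W₂ : Type*} [AddCommGroup W] [Module ℚ W] [Module E W]
  [IsScalarTower ℚ E W] [AddCommGroup W₁] [Module ℚ W₁] [Module E W₁] [IsScalarTower ℚ E W₁]
  [AddCommGroup W₂] [Module ℚ W₂] [Module E W₂] [IsScalarTower ℚ E W₂]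

lemma IsometricForms.transfer {Q₁ : W₁ → W₁ → E} {Q₂ : W₂ → W₂ → E}
    (h : IsometricForms E Q₁ Q₂) : IsometricForms ℚ (transfer E Q₁) (transfer E Q₂) := by
  obtain ⟨f, hf⟩ := h
  exact ⟨f.restrictScalars ℚ, fun x y => by simp [_root_.transfer, hf]⟩

lemma IsHermitianForm.isSymmQF_transfer [FiniteDimensional ℚ E] {Q : W → W → E}
    (hQ : IsHermitianForm c Q) : IsSymmQF ℚ (transfer E Q) := by
  refine ⟨fun x y z => ?_, fun a x y => ?_, fun x y => ?_, fun x hx => ?_⟩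
  · simp [transfer, hQ.1]
  · rw [transfer, ← algebraMap_smul E a x, hQ.2.1, ← Algebra.smul_def, map_smul, smul_eq_mul,
      transfer]
  · rw [transfer, transfer, hQ.2.2.1, ← c.coe_toRatAlgEquiv, Algebra.trace_eq_of_algEquiv]
  · have hQx : ∀ y, Q x y = 0 := fun y => (traceForm_nondegenerate ℚ E).1 _ fun z => by
      have hz : Q x (c.symm z • y) = Q x y * z := by
        rw [hQ.2.2.1 _ x, hQ.2.1, map_mul, ← hQ.2.2.1, c.apply_symm_apply, mul_comm]
      simpa [transfer, hz] using hx (c.symm z • y)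
    exact hQ.2.2.2 x hQx

end Transfer

lemma Algebra.det_toMatrix₂_traceForm_compl₂ {K E : Type*} [Field K] [Field E] [Algebra K E]
    {ι : Type*} [Fintype ι] [DecidableEq ι] (b : Basis ι K E) (L : E →ₗ[K] E) :
    (LinearMap.toMatrix₂ b b ((Algebra.traceForm K E).compl₂ L)).det =
      Algebra.discr K b * LinearMap.det L := by
  rw [LinearMap.toMatrix₂_compl₂ b b b, Matrix.det_mul, LinearMap.det_toMatrix,
    Algebra.discr_def]
  congr 2
  ext i j
  rw [LinearMap.toMatrix₂_apply, Algebra.traceMatrix_apply]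

lemma IsHermitianForm.detRep_transfer_eq_one {E : Type*} [Field E] [NumberField E] {c : E ≃+* E}
    (hCM : IsCMWithConj E c) (h4 : 4 ∣ finrank ℚ E)
    (hsq : ∃ t : ℚ, (NumberField.discr E : ℚ) = t ^ 2)
    {W : Type*} [AddCommGroup W] [Module ℚ W] [Module E W] [IsScalarTower ℚ E W]
    (hW : finrank E W = 1) {Q : W → W → E} (hQ : IsHermitianForm c Q) :
    DetRep ℚ (transfer E Q) 1 := by
  obtain ⟨α, hα0, hcα, hiso⟩ := hQ.isometricForms_of_finrank_eq_one hW
  have hTα := (isHermitianForm_scalar hCM.conj_conj hα0 hcα).isSymmQF_transfer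
  let σ := c.toRatAlgEquiv
  have hσ1 : σ ≠ 1 := fun h => hCM.1 (RingEquiv.ext fun x => AlgEquiv.ext_iff.mp h x)
  set L := LinearMap.mulLeft ℚ α ∘ₗ σ.toLinearMap
  have hL0 : LinearMap.det L ≠ 0 := by
    rw [LinearMap.det_comp]
    refine mul_ne_zero ?_ (LinearEquiv.isUnit_det' σ.toLinearEquiv).ne_zero
    exact (Algebra.norm_ne_zero_iff (R := ℚ)).mpr hα0
  obtain ⟨s, hs⟩ := σ.isSquare_det_mulLeft_comp hCM.conj_conj hσ1 hcα h4
  obtain ⟨t, ht⟩ := hsq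
  let b := NumberField.integralBasis E
  have hdet : (LinearMap.toMatrix₂ b b hTα.toBilin).det = (t * s) ^ 2 := by
    rw [show hTα.toBilin = (Algebra.traceForm ℚ E).compl₂ L from rfl,
      Algebra.det_toMatrix₂_traceForm_compl₂, ← NumberField.coe_discr, ht, hs]
    ring
  have hts : t * s ≠ 0 := by
    refine mul_ne_zero (fun ht0 => NumberField.discr_ne_zero E ?_) (fun hs0 => hL0 ?_)
    · exact_mod_cast (ht.trans (by rw [ht0]; ring) : (NumberField.discr E : ℚ) = 0)
    · rw [hs, hs0, mul_zero]
  have h := (hTα.toBilin_isSymm.detRep_det_toMatrix₂ b).of_isometric hiso.transfer.symm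
  rw [hdet] at h
  have h1 := h.mul_sq (inv_ne_zero hts)
  rwa [inv_pow, mul_inv_cancel₀ (pow_ne_zero 2 hts)] at h1

/-- Proposition `m = Delta = 1`. -/
theorem statement_8
    {E : Type*} [Field E] [NumberField E] (c : E ≃+* E) (hCM : IsCMWithConj E c)
    (hd : Module.finrank ℚ E = 20)
    (hsq : ∃ t : ℚ, (NumberField.discr E : ℚ) = t ^ 2)
    {W : Type*} [AddCommGroup W] [Module ℚ W] [Module E W] [IsScalarTower ℚ E W]
    (hW1 : Module.finrank E W = 1)
    (Q : W → W → E) (hQ : IsHermitianForm c Q)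
    {V' : Type*} [AddCommGroup V'] [Module ℚ V'] (BV' : V' → V' → ℚ)
    (hBV' : IsSymmQF ℚ BV')
    (hiso : IsometricForms ℚ (orthSum (transfer E Q) BV') VK3Form) :
    IsometricForms ℚ BV' (hypForm ℚ) := by
  have hW : finrank ℚ W = 20 := by rw [← Module.finrank_mul_finrank ℚ E W, hd, hW1]
  obtain ⟨f, -⟩ := id hiso
  have : FiniteDimensional ℚ W := Module.finite_of_finrank_eq_succ hW
  have : FiniteDimensional ℚ V' :=
    .of_surjective (LinearMap.snd ℚ W V' ∘ₗ f.symm.toLinearMap)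
      (Prod.snd_surjective.comp f.symm.surjective)
  have hV' : finrank ℚ V' = 2 := by
    have := f.finrank_eq
    simp [Module.finrank_prod, hW] at this
    omega
  have hT1 : DetRep ℚ (transfer E Q) 1 :=
    hQ.detRep_transfer_eq_one hCM (by rw [hd]; norm_num) hsq hW1
  obtain ⟨a, ha⟩ := hBV'.exists_detRep
  obtain ⟨u, hu, hau⟩ := isSymmQF_VK3Form.detRep_unique
    ((hT1.orthSum hQ.isSymmQF_transfer hBV' ha).of_isometric hiso) detRep_VK3Form
  refine hBV'.isometricForms_hypForm_of_detRep_neg_one hV' ?_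
  convert ha.mul_sq hu using 1
  rw [hau, one_mul]
end
end
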